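/- In the slab setting with q₁ = 0, let s ∈ (0, q₂] and suppose s ≤ q₁ⁱ for every excluded pair (q₁ⁱ, q₂ⁱ). Then rₓ(0, s) = s and r_y(0, s) = Pr(Y ∈ {z ∈ ℝ^d : δᵀ(z−x) ≥ σ‖δ‖₂ Φ⁻¹(1−s)}) = Φ(Φ⁻¹(s) + ‖δ‖₂/σ). -/

import Mathlib

open MeasureTheory ProbabilityTheory Real Filter

/-- The standard normal cumulative distribution function Φ. -/
noncomputable def Phi (t : ℝ) : ℝ := (gaussianReal 0 1 (Set.Iic t)).toReal

/-- The inverse Φ⁻¹ of the standard normal CDF (meaningful on (0,1)). -/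
noncomputable def PhiInv : ℝ → ℝ := Function.invFun Phi

/-- The Gaussian measure N(m, σ²I) on ℝ^d. -/
noncomputable def gaussianVec {d : ℕ} (m : Fin d → ℝ) (σ : ℝ) :
    Measure (Fin d → ℝ) :=
  Measure.pi fun i => gaussianReal (m i) (Real.toNNReal (σ ^ 2))

/-- Dot product on ℝ^d. -/
def dotp {d : ℕ} (a b : Fin d → ℝ) : ℝ := ∑ i, a i * b i

/-- Euclidean (ℓ₂) norm on ℝ^d. -/
noncomputable def l2norm {d : ℕ} (a : Fin d → ℝ) : ℝ := Real.sqrt (∑ i, a i ^ 2)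

/-- Φ⁻¹ extended to EReal with the conventions Φ⁻¹(0) = −∞, Φ⁻¹(1) = +∞. -/
noncomputable def PhiInvE (p : ℝ) : EReal :=
  if p ≤ 0 then ⊥ else if 1 ≤ p then ⊤ else ((PhiInv p : ℝ) : EReal)

/-- Φ extended to EReal with Φ(−∞) = 0 and Φ(+∞) = 1. -/
noncomputable def PhiE (e : EReal) : ℝ :=
  if e = ⊥ then 0 else if e = ⊤ then 1 else Phi e.toReal

/-- The slab C(a,b) = {z : σ‖δ‖₂ Φ⁻¹(1−b) < δᵀ(z−x) ≤ σ‖δ‖₂ Φ⁻¹(1−a)},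
with the conventions Φ⁻¹(0) = −∞ and Φ⁻¹(1) = +∞ (assuming σ‖δ‖₂ > 0, the
defining inequalities are stated for the normalized quantity δᵀ(z−x)/(σ‖δ‖₂)). -/
noncomputable def slab {d : ℕ} (σ : ℝ) (x δ : Fin d → ℝ) (a b : ℝ) :
    Set (Fin d → ℝ) :=
  {z | PhiInvE (1 - b) < ((dotp δ (z - x) / (σ * l2norm δ) : ℝ) : EReal) ∧
      ((dotp δ (z - x) / (σ * l2norm δ) : ℝ) : EReal) ≤ PhiInvE (1 - a)}

/-! The normalized coordinate `W z = δᵀ(z − x) / (σ‖δ‖₂)` is a standard normal under `X` and has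
law `N(‖δ‖₂/σ, 1)` under `Y`, since a linear functional of an isotropic Gaussian vector is a
one-dimensional Gaussian. The slab `C(0, s)` is the event `W > Φ⁻¹(1 − s)`; for `s ≤ q₂` it lies in
`C(0, q₂)` and for `s ≤ q₁ⁱ` it misses `C(q₁ⁱ, q₂ⁱ)`, so `C′ ∩ C(0, s) = C(0, s)`. The two
probabilities are then Gaussian tails, evaluated through `Φ⁻¹(1 − s) = −Φ⁻¹(s)`; closed and open
half-lines have the same probability because `W` has no atoms. -/

open scoped NNReal

section EuclideanCoordinates

variable {d : ℕ}

lemma l2norm_sq (c : Fin d → ℝ) : l2norm c ^ 2 = ∑ i, c i ^ 2 :=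
  Real.sq_sqrt (by positivity)

lemma dotp_self (c : Fin d → ℝ) : dotp c c = l2norm c ^ 2 := by
  rw [l2norm_sq]; simp only [dotp, pow_two]

lemma dotp_sub (c z x : Fin d → ℝ) : dotp c (z - x) = dotp c z - dotp c x := by
  simp only [dotp, Pi.sub_apply, mul_sub, Finset.sum_sub_distrib]

lemma measurable_dotp (c : Fin d → ℝ) : Measurable (dotp c) := by
  unfold dotp
  fun_prop

lemma l2norm_pos {c : Fin d → ℝ} (hc : c ≠ 0) : 0 < l2norm c := by
  obtain ⟨i, hi⟩ := Function.ne_iff.mp hc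
  exact Real.sqrt_pos.mpr (Finset.sum_pos' (fun j _ => sq_nonneg (c j))
    ⟨i, Finset.mem_univ i, pow_pos (abs_pos.mpr hi) 2 |>.trans_eq (sq_abs _)⟩)

end EuclideanCoordinates

namespace ProbabilityTheory

lemma map_sum_pi_gaussianReal {ι : Type*} [Fintype ι] (m : ι → ℝ) (v : ι → ℝ≥0) :
    (Measure.pi fun i => gaussianReal (m i) (v i)).map (fun z => ∑ i, z i) =
      gaussianReal (∑ i, m i) (∑ i, v i) := by
  refine Measure.ext_of_charFun ?_
  rw [charFun_map_sum_pi_eq_prod]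
  ext t
  simp only [Finset.prod_apply, charFun_gaussianReal, ← Complex.exp_sum]
  congr 1
  push_cast
  simp only [Finset.sum_sub_distrib, Finset.sum_mul, Finset.mul_sum, Finset.sum_div]

instance nullSingletonClass_gaussianReal_one (μ : ℝ) : NullSingletonClass (gaussianReal μ 1) :=
  nullSingletonClass_gaussianReal one_ne_zero

lemma continuous_cdf (μ : Measure ℝ) [IsProbabilityMeasure μ] [NullSingletonClass μ] :
    Continuous (cdf μ) := by
  refine continuous_iff_continuousAt.2 fun t =>
    (monotone_cdf μ).continuousAt_iff_leftLim_eq_rightLim.2 ?_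
  have h := (cdf μ).measure_singleton t
  rw [measure_cdf, measure_singleton, eq_comm, ENNReal.ofReal_eq_zero] at h
  rw [StieltjesFunction.rightLim_eq]
  exact le_antisymm ((monotone_cdf μ).leftLim_le le_rfl) (sub_nonpos.1 h)

lemma strictMono_cdf {μ : Measure ℝ} [IsProbabilityMeasure μ] (hμ : volume ≪ μ) :
    StrictMono (cdf μ) := by
  intro a b hab
  have h := (cdf μ).measure_Ioc a b
  rw [measure_cdf] at h
  have hpos : μ (Set.Ioc a b) ≠ 0 := fun h0 => hab.not_ge (by simpa using hμ h0)
  rw [h, Ne, ENNReal.ofReal_eq_zero, not_le, sub_pos] at hpos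
  exact hpos

end ProbabilityTheory

lemma map_dotp_gaussianVec {d : ℕ} (m c : Fin d → ℝ) (σ : ℝ) :
    (gaussianVec m σ).map (dotp c) =
      gaussianReal (dotp c m) ((σ ^ 2 * l2norm c ^ 2).toNNReal) := by
  have hdot : dotp c = (fun z => ∑ i, z i) ∘ fun z i => c i * z i := rfl
  rw [gaussianVec, hdot, ← Measure.map_map (by fun_prop) (by fun_prop),
    Measure.pi_map_pi (fun i => by fun_prop)]
  simp only [gaussianReal_map_const_mul]
  rw [map_sum_pi_gaussianReal]
  congr 1
  ext
  simp only [NNReal.coe_sum, NNReal.coe_mul, NNReal.coe_mk, Real.coe_toNNReal _ (sq_nonneg σ)]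
  rw [Real.coe_toNNReal _ (by positivity), l2norm_sq, Finset.mul_sum]
  exact Finset.sum_congr rfl fun i _ => mul_comm _ _

lemma measure_setOf_le_coe_eq_lt {μ : Measure ℝ} [NullSingletonClass μ] (e : EReal) :
    μ {t : ℝ | e ≤ t} = μ {t : ℝ | e < t} := by
  refine le_antisymm ?_ (measure_mono fun t (ht : e < t) => ht.le)
  have hsub : {t : ℝ | e ≤ t} ⊆ {t : ℝ | e < t} ∪ {t : ℝ | (t : EReal) = e} :=
    fun t (ht : e ≤ t) => (eq_or_lt_of_le ht).symm.imp id Eq.symm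
  have hnull : μ {t : ℝ | (t : EReal) = e} = 0 :=
    Set.Subsingleton.measure_zero (fun a ha b hb => EReal.coe_injective (ha.trans hb.symm)) μ
  calc μ {t : ℝ | e ≤ t} ≤ μ {t : ℝ | e < t} + μ {t : ℝ | (t : EReal) = e} :=
        (measure_mono hsub).trans (measure_union_le _ _)
    _ = μ {t : ℝ | e < t} := by rw [hnull, add_zero]

lemma Phi_eq_cdf : Phi = cdf (gaussianReal 0 1) := by
  ext t
  rw [Phi, cdf_eq_real, measureReal_def]

lemma gaussianReal_Ioi_toReal (μ t : ℝ) :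
    (gaussianReal μ 1 (Set.Ioi t)).toReal = Phi (μ - t) := by
  have hmap : (gaussianReal 0 1).map (μ - ·) = gaussianReal μ 1 := by
    rw [gaussianReal_map_const_sub, sub_zero]
  have hpre : (μ - ·) ⁻¹' Set.Ioi t = Set.Iio (μ - t) := by
    ext y
    simp only [Set.mem_preimage, Set.mem_Ioi, Set.mem_Iio]
    constructor <;> intro h <;> linarith
  rw [← hmap, Measure.map_apply (by fun_prop) measurableSet_Ioi, hpre,
    measure_congr Iio_ae_eq_Iic, Phi]

lemma Phi_neg (t : ℝ) : Phi (-t) = 1 - Phi t := by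
  rw [← zero_sub, ← gaussianReal_Ioi_toReal, ← Set.compl_Iic,
    prob_compl_eq_one_sub measurableSet_Iic, ENNReal.toReal_sub_of_le prob_le_one ENNReal.one_ne_top,
    ENNReal.toReal_one, Phi]

lemma Phi_PhiInv {p : ℝ} (h0 : 0 < p) (h1 : p < 1) : Phi (PhiInv p) = p := by
  refine Function.invFun_eq (mem_range_of_exists_le_of_exists_ge ?_ ?_ ?_)
  · rw [Phi_eq_cdf]; exact continuous_cdf _
  · rw [Phi_eq_cdf]; exact ((tendsto_cdf_atBot _).eventually_le_const h0).exists
  · rw [Phi_eq_cdf]; exact ((tendsto_cdf_atTop _).eventually_const_le h1).exists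

lemma Phi_strictMono : StrictMono Phi := by
  rw [Phi_eq_cdf]
  exact strictMono_cdf (gaussianReal_absolutelyContinuous' 0 one_ne_zero)

lemma PhiInv_one_sub {p : ℝ} (h0 : 0 < p) (h1 : p < 1) : PhiInv (1 - p) = -PhiInv p :=
  Phi_strictMono.injective <| by
    rw [Phi_PhiInv (by linarith) (by linarith), Phi_neg, Phi_PhiInv h0 h1]

lemma PhiInv_le_PhiInv {p q : ℝ} (h0 : 0 < p) (hpq : p ≤ q) (h1 : q < 1) :
    PhiInv p ≤ PhiInv q := by
  rwa [← Phi_strictMono.le_iff_le, Phi_PhiInv h0 (hpq.trans_lt h1),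
    Phi_PhiInv (h0.trans_le hpq) h1]

lemma PhiInvE_of_mem {p : ℝ} (h0 : 0 < p) (h1 : p < 1) : PhiInvE p = PhiInv p := by
  rw [PhiInvE, if_neg h0.not_ge, if_neg h1.not_ge]

lemma PhiInvE_of_nonpos {p : ℝ} (hp : p ≤ 0) : PhiInvE p = ⊥ := if_pos hp

lemma PhiInvE_of_one_le {p : ℝ} (hp : 1 ≤ p) : PhiInvE p = ⊤ := by
  rw [PhiInvE, if_neg (by linarith), if_pos hp]

lemma PhiInvE_mono : Monotone PhiInvE := by
  intro p q hpq
  by_cases hp : p ≤ 0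
  · exact (PhiInvE_of_nonpos hp).trans_le bot_le
  by_cases hq : 1 ≤ q
  · exact le_top.trans_eq (PhiInvE_of_one_le hq).symm
  push Not at hp hq
  rw [PhiInvE_of_mem hp (hpq.trans_lt hq), PhiInvE_of_mem (hp.trans_le hpq) hq,
    EReal.coe_le_coe_iff]
  exact PhiInv_le_PhiInv hp hpq hq

lemma PhiE_coe (t : ℝ) : PhiE t = Phi t := by
  rw [PhiE, if_neg (EReal.coe_ne_bot t), if_neg (EReal.coe_ne_top t), EReal.toReal_coe]

lemma gaussianReal_PhiInvE_lt_toReal (μ : ℝ) {p : ℝ} (h0 : 0 < p) (h1 : p ≤ 1) :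
    (gaussianReal μ 1 {t : ℝ | PhiInvE (1 - p) < t}).toReal = PhiE (PhiInvE p + μ) := by
  rcases h1.lt_or_eq with h1 | rfl
  · have hset : {t : ℝ | PhiInvE (1 - p) < t} = Set.Ioi (-PhiInv p) := by
      ext t
      rw [PhiInvE_of_mem (by linarith) (by linarith), PhiInv_one_sub h0 h1, Set.mem_ofPred_eq,
        EReal.coe_lt_coe_iff, Set.mem_Ioi]
    rw [hset, gaussianReal_Ioi_toReal, PhiInvE_of_mem h0 h1, ← EReal.coe_add, PhiE_coe,
      sub_neg_eq_add, add_comm]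
  · simp [PhiInvE_of_nonpos, PhiInvE_of_one_le, PhiE]

lemma PhiE_PhiInvE {p : ℝ} (h0 : 0 < p) (h1 : p ≤ 1) : PhiE (PhiInvE p) = p := by
  rcases h1.lt_or_eq with h1 | rfl
  · rw [PhiInvE_of_mem h0 h1, PhiE_coe, Phi_PhiInv h0 h1]
  · simp [PhiInvE_of_one_le, PhiE]

section Slab

variable {d : ℕ} (σ : ℝ) (x δ : Fin d → ℝ)

noncomputable def slabCoord (z : Fin d → ℝ) : ℝ := dotp δ (z - x) / (σ * l2norm δ)

lemma measurable_slabCoord : Measurable (slabCoord σ x δ) :=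
  ((measurable_dotp δ).comp (measurable_id.sub_const x)).div_const _

lemma map_slabCoord_gaussianVec {σ : ℝ} (hσ : 0 < σ) {δ : Fin d → ℝ} (hδ : δ ≠ 0)
    (m : Fin d → ℝ) :
    (gaussianVec m σ).map (slabCoord σ x δ) =
      gaussianReal (dotp δ (m - x) / (σ * l2norm δ)) 1 := by
  have hN := l2norm_pos hδ
  have hcoord : slabCoord σ x δ = (· / (σ * l2norm δ)) ∘ (· - dotp δ x) ∘ dotp δ := by
    ext z
    simp only [slabCoord, Function.comp_apply, dotp_sub]
  rw [hcoord, ← Measure.map_map (by fun_prop) ((measurable_sub_const _).comp (measurable_dotp δ)),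
    ← Measure.map_map (by fun_prop) (measurable_dotp δ), map_dotp_gaussianVec,
    gaussianReal_map_sub_const, gaussianReal_map_div_const, dotp_sub]
  congr 1
  ext
  simp only [NNReal.coe_one, NNReal.coe_div, NNReal.coe_mk]
  rw [Real.coe_toNNReal _ (by positivity)]
  field_simp

variable {σ x δ}

lemma slab_subset_slab {a b a' b' : ℝ} (ha : a' ≤ a) (hb : b ≤ b') :
    slab σ x δ a b ⊆ slab σ x δ a' b' := fun _ ⟨hlow, hup⟩ =>
  ⟨(PhiInvE_mono (by linarith)).trans_lt hlow, hup.trans (PhiInvE_mono (by linarith))⟩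

lemma disjoint_slab_slab {a b a' b' : ℝ} (h : b ≤ a') :
    Disjoint (slab σ x δ a b) (slab σ x δ a' b') :=
  Set.disjoint_left.2 fun _ ⟨hlow, _⟩ ⟨_, hup⟩ =>
    (hup.trans (PhiInvE_mono (by linarith))).not_gt hlow

variable (σ x δ)

lemma slab_zero_eq_preimage (b : ℝ) :
    slab σ x δ 0 b = slabCoord σ x δ ⁻¹' {t : ℝ | PhiInvE (1 - b) < t} := by
  ext z
  simp [slab, slabCoord, PhiInvE_of_one_le]

end Slab

theorem slab_initial_segment_prob_general
    {d : ℕ} (σ : ℝ) (hσ : 0 < σ)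
    (x δ : Fin d → ℝ) (hδ : δ ≠ 0)
    (q2 : ℝ) (hq2 : q2 ≤ 1)
    (n : ℕ) (e1 e2 : Fin n → ℝ)
    (C' : Set (Fin d → ℝ))
    (hC' : C' = slab σ x δ 0 q2 \ ⋃ i, slab σ x δ (e1 i) (e2 i))
    (rX rY : ℝ → ℝ → ℝ)
    (hrX : ∀ a b, rX a b = (gaussianVec x σ (C' ∩ slab σ x δ a b)).toReal)
    (hrY : ∀ a b, rY a b = (gaussianVec (x + δ) σ (C' ∩ slab σ x δ a b)).toReal)
    (s : ℝ) (hs0 : 0 < s) (hsq2 : s ≤ q2) (hse : ∀ i, s ≤ e1 i) :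
    rX 0 s = s ∧
    rY 0 s = (gaussianVec (x + δ) σ
      {z | PhiInvE (1 - s) ≤ ((dotp δ (z - x) / (σ * l2norm δ) : ℝ) : EReal)}).toReal ∧
    rY 0 s = PhiE (PhiInvE s + ((l2norm δ / σ : ℝ) : EReal)) := by
  have hs1 : s ≤ 1 := hsq2.trans hq2
  have hC : C' ∩ slab σ x δ 0 s = slab σ x δ 0 s := by
    rw [hC']
    exact Set.inter_eq_right.2 (Set.subset_sdiff.2 ⟨slab_subset_slab le_rfl hsq2,
      Set.disjoint_iUnion_right.2 fun i => disjoint_slab_slab (hse i)⟩)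
  have hlaw (m : Fin d → ℝ) {S : Set ℝ} (hS : MeasurableSet S) :
      gaussianVec m σ (slabCoord σ x δ ⁻¹' S) =
        gaussianReal (dotp δ (m - x) / (σ * l2norm δ)) 1 S := by
    rw [← map_slabCoord_gaussianVec x hσ hδ, Measure.map_apply (measurable_slabCoord σ x δ) hS]
  have hmeanX : dotp δ (x - x) / (σ * l2norm δ) = 0 := by simp [dotp]
  have hmeanY : dotp δ (x + δ - x) / (σ * l2norm δ) = l2norm δ / σ := by
    rw [add_sub_cancel_left, dotp_self]
    field_simp [(l2norm_pos hδ).ne']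
  have hlt : MeasurableSet {t : ℝ | PhiInvE (1 - s) < t} :=
    measurableSet_lt measurable_const measurable_coe_real_ereal
  have hle : MeasurableSet {t : ℝ | PhiInvE (1 - s) ≤ t} :=
    measurableSet_le measurable_const measurable_coe_real_ereal
  have hrY0 : rY 0 s = PhiE (PhiInvE s + ((l2norm δ / σ : ℝ) : EReal)) := by
    rw [hrY, hC, slab_zero_eq_preimage, hlaw _ hlt, hmeanY,
      gaussianReal_PhiInvE_lt_toReal _ hs0 hs1]
  refine ⟨?_, ?_, hrY0⟩
  · rw [hrX, hC, slab_zero_eq_preimage, hlaw _ hlt, hmeanX,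
      gaussianReal_PhiInvE_lt_toReal _ hs0 hs1, EReal.coe_zero, add_zero, PhiE_PhiInvE hs0 hs1]
  · rw [hrY0, ← gaussianReal_PhiInvE_lt_toReal _ hs0 hs1, ← measure_setOf_le_coe_eq_lt, ← hmeanY,
      ← hlaw _ hle]
    rfl

/-- Lemma 8 of the paper: in the slab setting with q₁ = 0, if s ∈ (0,q₂] lies
below every excluded pair (s ≤ q₁ⁱ for all i), then rₓ(0,s) = s and
r_y(0,s) = Pr(Y ∈ {z : δᵀ(z−x) ≥ σ‖δ‖₂Φ⁻¹(1−s)}) = Φ(Φ⁻¹(s) + ‖δ‖₂/σ)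
(under the conventions Φ⁻¹(0) = −∞, Φ⁻¹(1) = +∞). -/
theorem slab_initial_segment_prob
    {d : ℕ} (hd : 1 ≤ d) (σ : ℝ) (hσ : 0 < σ)
    (x δ : Fin d → ℝ) (hδ : δ ≠ 0)
    (q2 : ℝ) (hq12 : 0 < q2) (hq2 : q2 ≤ 1)
    (n : ℕ) (e1 e2 : Fin n → ℝ)
    (he : ∀ i, 0 ≤ e1 i ∧ e1 i ≤ e2 i ∧ e2 i ≤ q2)
    (C' : Set (Fin d → ℝ))
    (hC' : C' = slab σ x δ 0 q2 \ ⋃ i, slab σ x δ (e1 i) (e2 i))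
    (rX rY : ℝ → ℝ → ℝ)
    (hrX : ∀ a b, rX a b = (gaussianVec x σ (C' ∩ slab σ x δ a b)).toReal)
    (hrY : ∀ a b, rY a b = (gaussianVec (x + δ) σ (C' ∩ slab σ x δ a b)).toReal)
    (s : ℝ) (hs0 : 0 < s) (hsq2 : s ≤ q2) (hse : ∀ i, s ≤ e1 i) :
    rX 0 s = s ∧
    rY 0 s = (gaussianVec (x + δ) σ
      {z | PhiInvE (1 - s) ≤ ((dotp δ (z - x) / (σ * l2norm δ) : ℝ) : EReal)}).toReal ∧
    rY 0 s = PhiE (PhiInvE s + ((l2norm δ / σ : ℝ) : EReal)) :=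
  slab_initial_segment_prob_general σ hσ x δ hδ q2 hq2 n e1 e2 C' hC' rX rY hrX hrY s hs0 hsq2 hse
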